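/- arXiv:1210.3101 — 4 statements merged into one kernel-verified Lean document; each statement's English description precedes it below -/
import Mathlib

section
/- Let S be a submodule of a free module M of finite rank over 𝔽[x], with a fixed free basis K of M and a monomial order on the monomials {x^k · e : k ≥ 0, e ∈ K}. If B generates S over 𝔽[x] and the leading monomials of the elements of B are 𝔽[x]-multiples of pairwise distinct elements of K, then B is a Gröbner basis of S, and moreover B is a free basis of S. -/
/-- The monomial support of an element of the free module `𝔽[x]^r`: the pairs `(k, j)`
such that the monomial `x^k · e_j` occurs in `f`. -/
def msupp {𝔽 : Type*} [Field 𝔽] {r : ℕ} (f : Fin r → Polynomial 𝔽) : Set (ℕ × Fin r) :=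
  {m | (f m.2).coeff m.1 ≠ 0}

/-- `m` is the leading monomial of `f` with respect to the monomial order `le`. -/
def IsLM {𝔽 : Type*} [Field 𝔽] {r : ℕ} (le : ℕ × Fin r → ℕ × Fin r → Prop)
    (f : Fin r → Polynomial 𝔽) (m : ℕ × Fin r) : Prop :=
  m ∈ msupp f ∧ ∀ m' ∈ msupp f, le m' m

/-!
Write an element of `S = span B` as `∑ c_b • b`. Multiplying by `c_b` shifts the leading monomial
of `b` to `x^{deg c_b} · LM(b)`, which still lies on the basis vector of `LM(b)`. Since these basis
vectors are pairwise distinct, the shifted leading monomials of the nonzero terms are pairwise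
distinct, so the largest one cannot cancel and is the leading monomial of the sum. This shows at
once that every leading monomial in `S` is a multiple of some `LM(b)`, and that no nontrivial
combination of `B` vanishes.
-/

open Polynomial

theorem Finset.exists_mem_forall_rel_apply {α β : Type*} (r : β → β → Prop) [IsTrans β r]
    [Std.Total r] {s : Finset α} (hs : s.Nonempty) (f : α → β) :
    ∃ a ∈ s, ∀ a' ∈ s, r (f a') (f a) := by
  induction hs using Finset.Nonempty.cons_induction with
  | singleton a => exact ⟨a, mem_singleton_self a, by simpa using refl_of r (f a)⟩
  | cons a s _ _ ih =>
    obtain ⟨b, hb, hmax⟩ := ih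
    rcases total_of r (f a) (f b) with hab | hba
    · exact ⟨b, mem_cons_of_mem hb, (forall_mem_cons _ _).2 ⟨hab, hmax⟩⟩
    · exact ⟨a, mem_cons_self a s,
        (forall_mem_cons _ _).2 ⟨refl_of r (f a), fun a' ha' => trans_of r (hmax a' ha') hba⟩⟩

section MonomialOrder

variable {𝔽 : Type*} [Field 𝔽] {r : ℕ} (le : ℕ × Fin r → ℕ × Fin r → Prop)

def IsGroebnerBasis (lm : (Fin r → 𝔽[X]) → ℕ × Fin r) (S : Submodule 𝔽[X] (Fin r → 𝔽[X]))
    (B : Finset (Fin r → 𝔽[X])) : Prop :=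
  ∀ f ∈ S, f ≠ 0 → ∀ m, IsLM le f m → ∃ b ∈ B, (lm b).2 = m.2 ∧ (lm b).1 ≤ m.1

theorem rel_add_add_of_rel
    (hcompat : ∀ (k k' : ℕ) (j j' : Fin r), le (k, j) (k', j') → le (k + 1, j) (k' + 1, j'))
    {k k' : ℕ} {j j' : Fin r} (h : le (k, j) (k', j')) (d : ℕ) :
    le (d + k, j) (d + k', j') := by
  induction d with
  | zero => simpa using h
  | succ d ih => simpa only [add_right_comm d 1] using hcompat _ _ _ _ ih

theorem rel_of_fst_le [IsPreorder _ le] (hxgt : ∀ (k : ℕ) (j : Fin r), le (k, j) (k + 1, j))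
    {k k' : ℕ} (j : Fin r) (h : k ≤ k') : le (k, j) (k', j) := by
  induction h with
  | refl => exact refl_of le _
  | step _ ih => exact trans_of le ih (hxgt _ _)

theorem exists_of_mem_msupp_smul {c : 𝔽[X]} {f : Fin r → 𝔽[X]} {m : ℕ × Fin r}
    (hm : m ∈ msupp (c • f)) : ∃ i ≤ c.natDegree, ∃ k, i + k = m.1 ∧ (k, m.2) ∈ msupp f := by
  have hcoeff : (c * f m.2).coeff m.1 ≠ 0 := hm
  rw [coeff_mul] at hcoeff
  obtain ⟨⟨i, k⟩, hik, hne⟩ := Finset.exists_ne_zero_of_sum_ne_zero hcoeff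
  exact ⟨i, le_natDegree_of_ne_zero (left_ne_zero_of_mul hne), k,
    Finset.HasAntidiagonal.mem_antidiagonal.1 hik, right_ne_zero_of_mul hne⟩

theorem exists_mem_msupp_of_mem_msupp_sum {ι : Type*} {s : Finset ι} {f : ι → Fin r → 𝔽[X]}
    {m : ℕ × Fin r} (hm : m ∈ msupp (∑ i ∈ s, f i)) : ∃ i ∈ s, m ∈ msupp (f i) := by
  have hcoeff : ((∑ i ∈ s, f i) m.2).coeff m.1 ≠ 0 := hm
  rw [Finset.sum_apply, finsetSum_coeff] at hcoeff
  exact Finset.exists_ne_zero_of_sum_ne_zero hcoeff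

namespace IsLM

variable {le} {f : Fin r → 𝔽[X]} {m : ℕ × Fin r}

theorem ne_zero (h : IsLM le f m) : f ≠ 0 := by
  rintro rfl
  exact h.1 (by simp)

theorem unique [Std.Antisymm le] {m' : ℕ × Fin r} (h : IsLM le f m) (h' : IsLM le f m') :
    m = m' :=
  antisymm_of le (h'.2 m h.1) (h.2 m' h'.1)

theorem natDegree_eq [IsPartialOrder _ le] (hxgt : ∀ (k : ℕ) (j : Fin r), le (k, j) (k + 1, j))
    (h : IsLM le f m) : (f m.2).natDegree = m.1 := by
  have hcoeff : (f m.2).coeff m.1 ≠ 0 := h.1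
  have hne : f m.2 ≠ 0 := fun h0 => hcoeff (by simp [h0])
  have htop : ((f m.2).natDegree, m.2) ∈ msupp f := leadingCoeff_ne_zero.2 hne
  exact congrArg Prod.fst <|
    antisymm_of le (h.2 _ htop) (rel_of_fst_le le hxgt m.2 (le_natDegree_of_ne_zero hcoeff))

theorem smul [IsPartialOrder _ le]
    (hcompat : ∀ (k k' : ℕ) (j j' : Fin r), le (k, j) (k', j') → le (k + 1, j) (k' + 1, j'))
    (hxgt : ∀ (k : ℕ) (j : Fin r), le (k, j) (k + 1, j))
    (h : IsLM le f m) {c : 𝔽[X]} (hc : c ≠ 0) : IsLM le (c • f) (c.natDegree + m.1, m.2) := by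
  refine ⟨?_, fun ⟨n, j⟩ hm' => ?_⟩
  · have hf : f m.2 ≠ 0 := fun h0 => h.1 (by simp [h0])
    show (c * f m.2).coeff (c.natDegree + m.1) ≠ 0
    rw [← h.natDegree_eq hxgt, coeff_mul_degree_add_degree]
    exact mul_ne_zero (leadingCoeff_ne_zero.2 hc) (leadingCoeff_ne_zero.2 hf)
  · obtain ⟨i, hi, k, rfl, hk⟩ := exists_of_mem_msupp_smul hm'
    exact trans_of le (rel_add_add_of_rel le hcompat (h.2 _ hk) i)
      (rel_of_fst_le le hxgt m.2 (Nat.add_le_add_right hi _))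

end IsLM

theorem exists_isLM_sum [IsLinearOrder _ le] {ι : Type*} {s : Finset ι} (hs : s.Nonempty)
    {f : ι → Fin r → 𝔽[X]} {μ : ι → ℕ × Fin r} (hf : ∀ i ∈ s, IsLM le (f i) (μ i))
    (hμ : Set.InjOn μ s) : ∃ i ∈ s, IsLM le (∑ j ∈ s, f j) (μ i) := by
  obtain ⟨i, hi, hmax⟩ := s.exists_mem_forall_rel_apply le hs μ
  refine ⟨i, hi, ?_, fun m hm => ?_⟩
  · have hvanish : ∀ j ∈ s, j ≠ i → (f j (μ i).2).coeff (μ i).1 = 0 := fun j hj hji => by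
      by_contra hne
      exact hji (hμ hj hi (antisymm_of le (hmax j hj) ((hf j hj).2 _ hne)))
    show ((∑ j ∈ s, f j) (μ i).2).coeff (μ i).1 ≠ 0
    rw [Finset.sum_apply, finsetSum_coeff, Finset.sum_eq_single_of_mem i hi hvanish]
    exact (hf i hi).1
  · obtain ⟨j, hj, hmj⟩ := exists_mem_msupp_of_mem_msupp_sum hm
    exact trans_of le ((hf j hj).2 m hmj) (hmax j hj)

theorem exists_isLM_sum_smul [IsLinearOrder _ le]
    (hcompat : ∀ (k k' : ℕ) (j j' : Fin r), le (k, j) (k', j') → le (k + 1, j) (k' + 1, j'))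
    (hxgt : ∀ (k : ℕ) (j : Fin r), le (k, j) (k + 1, j))
    {ι : Type*} {s : Finset ι} {v : ι → Fin r → 𝔽[X]} {μ : ι → ℕ × Fin r}
    (hv : ∀ i ∈ s, IsLM le (v i) (μ i)) (hμ : Set.InjOn (fun i => (μ i).2) s)
    {c : ι → 𝔽[X]} (hc : ∃ i ∈ s, c i ≠ 0) :
    ∃ i ∈ s, IsLM le (∑ j ∈ s, c j • v j) ((c i).natDegree + (μ i).1, (μ i).2) := by
  classical
  obtain ⟨i₀, hi₀, hci₀⟩ := hc
  have hsupp : (s.filter (c · ≠ 0)).Nonempty := ⟨i₀, Finset.mem_filter.2 ⟨hi₀, hci₀⟩⟩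
  obtain ⟨i, hi, hlm⟩ := exists_isLM_sum le hsupp
    (f := fun i => c i • v i) (μ := fun i => ((c i).natDegree + (μ i).1, (μ i).2))
    (fun i hi => (hv i (Finset.mem_filter.1 hi).1).smul hcompat hxgt (Finset.mem_filter.1 hi).2)
    (fun i hi j hj hij => hμ (Finset.filter_subset _ s hi) (Finset.filter_subset _ s hj)
      (by simpa using congrArg Prod.snd hij))
  rw [Finset.sum_filter_of_ne (p := (c · ≠ 0)) fun j _ hj hcj => hj (by rw [hcj, zero_smul])] at hlm
  exact ⟨i, Finset.filter_subset _ s hi, hlm⟩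

theorem linearIndependent_of_isLM [IsLinearOrder _ le]
    (hcompat : ∀ (k k' : ℕ) (j j' : Fin r), le (k, j) (k', j') → le (k + 1, j) (k' + 1, j'))
    (hxgt : ∀ (k : ℕ) (j : Fin r), le (k, j) (k + 1, j))
    {ι : Type*} {v : ι → Fin r → 𝔽[X]} {μ : ι → ℕ × Fin r} (hv : ∀ i, IsLM le (v i) (μ i))
    (hμ : Function.Injective fun i => (μ i).2) : LinearIndependent 𝔽[X] v := by
  rw [linearIndependent_iff']
  intro s c hsum i hi
  by_contra hci
  obtain ⟨j, -, hlm⟩ :=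
    exists_isLM_sum_smul le hcompat hxgt (fun i _ => hv i) hμ.injOn ⟨i, hi, hci⟩
  exact hlm.ne_zero hsum

theorem isGroebnerBasis_span_of_injOn [IsLinearOrder _ le]
    (hcompat : ∀ (k k' : ℕ) (j j' : Fin r), le (k, j) (k', j') → le (k + 1, j) (k' + 1, j'))
    (hxgt : ∀ (k : ℕ) (j : Fin r), le (k, j) (k + 1, j))
    {B : Finset (Fin r → 𝔽[X])} {lm : (Fin r → 𝔽[X]) → ℕ × Fin r}
    (hlm : ∀ b ∈ B, IsLM le b (lm b)) (hinj : Set.InjOn (fun b => (lm b).2) B) :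
    IsGroebnerBasis le lm (Submodule.span 𝔽[X] B) B := by
  intro f hf hf0 m hm
  obtain ⟨c, -, rfl⟩ := Submodule.mem_span_finset.1 hf
  have hc : ∃ b ∈ B, c b ≠ 0 := by
    by_contra! hc
    exact hf0 (Finset.sum_eq_zero fun b hb => by rw [hc b hb, zero_smul])
  obtain ⟨b, hb, hlmb⟩ := exists_isLM_sum_smul le hcompat hxgt hlm hinj hc
  obtain rfl := hm.unique hlmb
  exact ⟨b, hb, rfl, Nat.le_add_left _ _⟩

end MonomialOrder

theorem groebner_criterion_and_free_basis_general
    {𝔽 : Type*} [Field 𝔽] {r : ℕ}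
    (le : ℕ × Fin r → ℕ × Fin r → Prop)
    (hrefl : ∀ m, le m m)
    (htot : ∀ m m', le m m' ∨ le m' m)
    (htrans : ∀ a b c, le a b → le b c → le a c)
    (hanti : ∀ a b, le a b → le b a → a = b)
    (hcompat : ∀ (k k' : ℕ) (j j' : Fin r), le (k, j) (k', j') → le (k + 1, j) (k' + 1, j'))
    (hxgt : ∀ (k : ℕ) (j : Fin r), le (k, j) (k + 1, j))
    (S : Submodule (Polynomial 𝔽) (Fin r → Polynomial 𝔽))
    (B : Finset (Fin r → Polynomial 𝔽))
    (hspan : Submodule.span (Polynomial 𝔽) (B : Set (Fin r → Polynomial 𝔽)) = S)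
    (lm : (Fin r → Polynomial 𝔽) → ℕ × Fin r)
    (hlm : ∀ b ∈ B, IsLM le b (lm b))
    (hdistinct : ∀ b ∈ B, ∀ b' ∈ B, b ≠ b' → (lm b).2 ≠ (lm b').2) :
    (∀ f ∈ S, f ≠ 0 → ∀ m, IsLM le f m → ∃ b ∈ B, (lm b).2 = m.2 ∧ (lm b).1 ≤ m.1) ∧
    LinearIndependent (Polynomial 𝔽) (fun b : B => (b : Fin r → Polynomial 𝔽)) := by
  let _ : IsLinearOrder _ le :=
    { refl := hrefl, trans := htrans, antisymm := hanti, total := htot }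
  have hinj : Set.InjOn (fun b => (lm b).2) B := fun b hb b' hb' h =>
    by_contra fun hne => hdistinct b hb b' hb' hne h
  subst hspan
  exact ⟨isGroebnerBasis_span_of_injOn le hcompat hxgt hlm hinj,
    linearIndependent_of_isLM le hcompat hxgt (fun b => hlm b b.2)
      fun b b' h => Subtype.ext (hinj b.2 b'.2 h)⟩

/-- if `B` generates a submodule `S` of a free `𝔽[x]`-module and the leading
monomials of the elements of `B` (w.r.t. a monomial order `le`) are `𝔽[x]`-multiples of
pairwise distinct free-basis elements, then `B` is a Gröbner basis of `S` (every leading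
monomial of a nonzero element of `S` is a monomial multiple of some `LM(b)`, `b ∈ B`),
and moreover `B` is a free basis of `S`. -/
theorem groebner_criterion_and_free_basis
    {𝔽 : Type*} [Field 𝔽] {r : ℕ}
    (le : ℕ × Fin r → ℕ × Fin r → Prop)
    (hrefl : ∀ m, le m m)
    (htot : ∀ m m', le m m' ∨ le m' m)
    (htrans : ∀ a b c, le a b → le b c → le a c)
    (hanti : ∀ a b, le a b → le b a → a = b)
    (hcompat : ∀ (k k' : ℕ) (j j' : Fin r), le (k, j) (k', j') → le (k + 1, j) (k' + 1, j'))
    (hxgt : ∀ (k : ℕ) (j : Fin r), le (k, j) (k + 1, j))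
    (hwf : WellFounded (fun a b => le a b ∧ a ≠ b))
    (S : Submodule (Polynomial 𝔽) (Fin r → Polynomial 𝔽))
    (B : Finset (Fin r → Polynomial 𝔽))
    (hspan : Submodule.span (Polynomial 𝔽) (B : Set (Fin r → Polynomial 𝔽)) = S)
    (lm : (Fin r → Polynomial 𝔽) → ℕ × Fin r)
    (hlm : ∀ b ∈ B, IsLM le b (lm b))
    (hdistinct : ∀ b ∈ B, ∀ b' ∈ B, b ≠ b' → (lm b).2 ≠ (lm b').2) :
    (∀ f ∈ S, f ≠ 0 → ∀ m, IsLM le f m → ∃ b ∈ B, (lm b).2 = m.2 ∧ (lm b).1 ≤ m.1) ∧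
    LinearIndependent (Polynomial 𝔽) (fun b : B => (b : Fin r → Polynomial 𝔽)) :=
  groebner_criterion_and_free_basis_general le hrefl htot htrans hanti hcompat hxgt S B hspan lm hlm
    hdistinct
end

section
/- Let S be a submodule of a free 𝔽[x]-module of rank r with free basis K = {e_1, …, e_r}, and suppose B = {b_1, …, b_r} is a Gröbner basis of S such that LM(b_j) = x^{d_j} e_j for each j. Then dim_𝔽(M/S) = d_1 + d_2 + ⋯ + d_r. -/
/-!
The standard monomials `x ^ k • e_j` with `k < d j` span an `𝔽`-complement of `S`. A nonzero
element of `S` in their span would have a leading monomial that is not a multiple of any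
`x ^ d j • e_j`, against the Gröbner property. Conversely, for `k = d j + s` the element
`x ^ s • b j ∈ S` equals `x ^ k • e_j`, times the nonzero leading coefficient of `b j`, plus
monomials strictly below `x ^ k • e_j` (multiplication by `x` is monotone for the order), so
well-founded induction on monomials puts each of them in `S` plus that span.
-/

open Polynomial

theorem Set.Finite.exists_forall_rel_of_total {α : Type*} {rel : α → α → Prop}
    (htot : ∀ a b, rel a b ∨ rel b a) (htrans : ∀ a b c, rel a b → rel b c → rel a c)
    {s : Set α} (hs : s.Finite) (hne : s.Nonempty) : ∃ m ∈ s, ∀ x ∈ s, rel x m := by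
  let : LE α := ⟨rel⟩
  have : IsTrans α (· ≤ ·) := ⟨htrans⟩
  obtain ⟨m, hm, hmax⟩ := hs.exists_maximal hne
  exact ⟨m, hm, fun x hx => (htot x m).elim id (hmax hx)⟩

section Monomials

variable {𝔽 : Type*} [Field 𝔽] {r : ℕ}

theorem msupp_finite (f : Fin r → 𝔽[X]) : (msupp f).Finite := by
  refine (Set.finite_iUnion fun j => (f j).support.finite_toSet.image (·, j)).subset ?_
  rintro ⟨k, j⟩ hk
  exact Set.mem_iUnion.2 ⟨j, k, mem_support_iff.2 hk, rfl⟩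

theorem msupp_nonempty {f : Fin r → 𝔽[X]} (hf : f ≠ 0) : (msupp f).Nonempty := by
  obtain ⟨j, hj⟩ := Function.ne_iff.1 hf
  obtain ⟨k, hk⟩ : ∃ k, (f j).coeff k ≠ 0 := by simpa [Polynomial.ext_iff] using hj
  exact ⟨(k, j), hk⟩

theorem exists_isLM {le : ℕ × Fin r → ℕ × Fin r → Prop} (htot : ∀ m m', le m m' ∨ le m' m)
    (htrans : ∀ a b c, le a b → le b c → le a c) {f : Fin r → 𝔽[X]} (hf : f ≠ 0) :
    ∃ m, IsLM le f m :=
  let ⟨m, hm, hmax⟩ := (msupp_finite f).exists_forall_rel_of_total htot htrans (msupp_nonempty hf)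
  ⟨m, hm, hmax⟩

theorem mem_of_forall_msupp_single_mem (W : Submodule 𝔽 (Fin r → 𝔽[X])) {f : Fin r → 𝔽[X]}
    (h : ∀ m ∈ msupp f, Pi.single m.2 (X ^ m.1) ∈ W) : f ∈ W := by
  classical
  rw [← Finset.univ_sum_single f]
  refine W.sum_mem fun j _ => ?_
  rw [(f j).as_sum_support_C_mul_X_pow, ← AddMonoidHom.single_apply, map_sum]
  refine W.sum_mem fun k hk => ?_
  rw [AddMonoidHom.single_apply, ← smul_eq_C_mul, Pi.single_smul']
  exact W.smul_mem _ (h (k, j) (mem_support_iff.1 hk))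

theorem mem_msupp_of_mem_msupp_sub_leading {f : Fin r → 𝔽[X]} {n : ℕ} {j : Fin r}
    {m : ℕ × Fin r}
    (hm : m ∈ msupp (f - (f j).coeff n • (Pi.single j (X ^ n) : Fin r → 𝔽[X]))) :
    m ∈ msupp f ∧ m ≠ (n, j) := by
  obtain ⟨k, i⟩ := m
  by_cases h : (k, i) = (n, j)
  · cases h
    simp [msupp] at hm
  · have hsingle : ((Pi.single j (X ^ n) : Fin r → 𝔽[X]) i).coeff k = 0 := by
      rcases eq_or_ne i j with rfl | hij
      · simpa [coeff_X_pow] using fun hkn => h (by rw [hkn])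
      · simp [hij]
    exact ⟨by simpa [msupp, hsingle] using hm, h⟩

theorem exists_mem_msupp_of_mem_msupp_X_pow_smul {f : Fin r → 𝔽[X]} {s : ℕ} {m : ℕ × Fin r}
    (hm : m ∈ msupp ((X ^ s : 𝔽[X]) • f)) : ∃ k, m.1 = k + s ∧ (k, m.2) ∈ msupp f := by
  obtain ⟨k', i⟩ := m
  simp only [msupp, Set.mem_ofPred_eq, Pi.smul_apply, smul_eq_mul, coeff_X_pow_mul'] at hm ⊢
  split_ifs at hm with hs
  · exact ⟨k' - s, by omega, hm⟩
  · exact absurd rfl hm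

end Monomials

section MonomialOrder

variable {𝔽 : Type*} [Field 𝔽] {r : ℕ} {le : ℕ × Fin r → ℕ × Fin r → Prop}

theorem rel_add_of_compat
    (hcompat : ∀ (k k' : ℕ) (j j' : Fin r), le (k, j) (k', j') → le (k + 1, j) (k' + 1, j'))
    {k k' : ℕ} {j j' : Fin r} (s : ℕ) (h : le (k, j) (k', j')) : le (k + s, j) (k' + s, j') := by
  induction s with
  | zero => exact h
  | succ s ih => exact hcompat _ _ _ _ ih

theorem IsLM.rel_of_mem_msupp_X_pow_smul_sub
    (hcompat : ∀ (k k' : ℕ) (j j' : Fin r), le (k, j) (k', j') → le (k + 1, j) (k' + 1, j'))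
    {f : Fin r → 𝔽[X]} {n : ℕ} {j : Fin r} (hf : IsLM le f (n, j)) (s : ℕ) {m : ℕ × Fin r}
    (hm : m ∈ msupp ((X ^ s : 𝔽[X]) •
      (f - (f j).coeff n • (Pi.single j (X ^ n) : Fin r → 𝔽[X])))) :
    le m (n + s, j) ∧ m ≠ (n + s, j) := by
  obtain ⟨k, hk, hmem⟩ := exists_mem_msupp_of_mem_msupp_X_pow_smul hm
  obtain ⟨hkf, hne⟩ := mem_msupp_of_mem_msupp_sub_leading hmem
  obtain ⟨k', i⟩ := m
  obtain rfl : k' = k + s := hk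
  exact ⟨rel_add_of_compat hcompat s (hf.2 _ hkf), fun h => hne (by simp_all)⟩

end MonomialOrder

section Footprint

variable (𝔽 : Type*) [Field 𝔽] {r : ℕ} (d : Fin r → ℕ)

noncomputable def footprint : Submodule 𝔽 (Fin r → 𝔽[X]) :=
  Submodule.span 𝔽 (Set.range fun t : Σ j, Fin (d j) => Pi.single t.1 (X ^ (t.2 : ℕ)))

theorem linearIndependent_single_X_pow :
    LinearIndependent 𝔽 fun t : Σ j : Fin r, Fin (d j) =>
      (Pi.single t.1 (X ^ (t.2 : ℕ)) : Fin r → 𝔽[X]) := by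
  have hfamily :
      (fun t : Σ j : Fin r, Fin (d j) => (Pi.single t.1 (X ^ (t.2 : ℕ)) : Fin r → 𝔽[X])) =
        (Pi.basis fun _ => basisMonomials 𝔽) ∘ Sigma.map id fun j (k : Fin (d j)) => (k : ℕ) := by
    ext ⟨j, k⟩ : 1
    simp [Sigma.map, X_pow_eq_monomial]
  rw [hfamily]
  exact (Pi.basis _).linearIndependent.comp _
    (Function.injective_id.sigma_map fun _ => Fin.val_injective)

theorem finrank_footprint : Module.finrank 𝔽 (footprint 𝔽 d) = ∑ j, d j := by
  rw [footprint, finrank_span_eq_card (linearIndependent_single_X_pow 𝔽 d)]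
  simp

variable {𝔽 d}

theorem single_X_pow_mem_footprint {k : ℕ} {j : Fin r} (hk : k < d j) :
    (Pi.single j (X ^ k) : Fin r → 𝔽[X]) ∈ footprint 𝔽 d :=
  Submodule.subset_span ⟨⟨j, k, hk⟩, rfl⟩

theorem footprint_le_pi_degreeLT :
    footprint 𝔽 d ≤ Submodule.pi Set.univ fun j => degreeLT 𝔽 (d j) := by
  refine Submodule.span_le.2 ?_
  rintro _ ⟨⟨i, k⟩, rfl⟩ j -
  rcases eq_or_ne j i with rfl | hji
  · simp [mem_degreeLT]
  · simp [hji]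

theorem coeff_eq_zero_of_mem_footprint {f : Fin r → 𝔽[X]} (hf : f ∈ footprint 𝔽 d) {k : ℕ}
    {j : Fin r} (hk : d j ≤ k) : (f j).coeff k = 0 :=
  coeff_eq_zero_of_degree_lt <|
    (mem_degreeLT.1 (footprint_le_pi_degreeLT hf j trivial)).trans_le (by exact_mod_cast hk)

end Footprint

section GroebnerBasis

variable {𝔽 : Type*} [Field 𝔽] {r : ℕ} {le : ℕ × Fin r → ℕ × Fin r → Prop}
  {S : Submodule 𝔽[X] (Fin r → 𝔽[X])} {b : Fin r → Fin r → 𝔽[X]} {d : Fin r → ℕ}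

theorem disjoint_footprint (htot : ∀ m m', le m m' ∨ le m' m)
    (htrans : ∀ a b c, le a b → le b c → le a c)
    (hGB : ∀ f ∈ S, f ≠ 0 → ∀ m, IsLM le f m → ∃ j, m.2 = j ∧ d j ≤ m.1) :
    Disjoint (S.restrictScalars 𝔽) (footprint 𝔽 d) := by
  refine Submodule.disjoint_def.2 fun f hfS hfd => ?_
  by_contra hf
  obtain ⟨m, hm⟩ := exists_isLM htot htrans hf
  obtain ⟨j, rfl, hdj⟩ := hGB f hfS hf m hm
  exact hm.1 (coeff_eq_zero_of_mem_footprint hfd hdj)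

theorem single_X_pow_mem_sup_footprint
    (hcompat : ∀ (k k' : ℕ) (j j' : Fin r), le (k, j) (k', j') → le (k + 1, j) (k' + 1, j'))
    (hwf : WellFounded fun a b => le a b ∧ a ≠ b) (hbS : ∀ j, b j ∈ S)
    (hlm : ∀ j, IsLM le (b j) (d j, j)) (m : ℕ × Fin r) :
    (Pi.single m.2 (X ^ m.1) : Fin r → 𝔽[X]) ∈ S.restrictScalars 𝔽 ⊔ footprint 𝔽 d := by
  set W := S.restrictScalars 𝔽 ⊔ footprint 𝔽 d
  induction m using hwf.induction with
  | _ m ih =>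
  obtain ⟨k, j⟩ := m
  rcases lt_or_ge k (d j) with hk | hk
  · exact Submodule.mem_sup_right (single_X_pow_mem_footprint hk)
  obtain ⟨s, rfl⟩ := Nat.exists_eq_add_of_le hk
  set L := (b j j).coeff (d j)
  have htail : (X ^ s : 𝔽[X]) • (b j - L • (Pi.single j (X ^ d j) : Fin r → 𝔽[X])) ∈ W :=
    mem_of_forall_msupp_single_mem W fun m hm =>
      ih m ((hlm j).rel_of_mem_msupp_X_pow_smul_sub hcompat s hm)
  have hb : (X ^ s : 𝔽[X]) • b j ∈ W := Submodule.mem_sup_left (S.smul_mem _ (hbS j))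
  have hsplit : L • (Pi.single j (X ^ (d j + s)) : Fin r → 𝔽[X]) = (X ^ s : 𝔽[X]) • b j -
      (X ^ s : 𝔽[X]) • (b j - L • (Pi.single j (X ^ d j) : Fin r → 𝔽[X])) := by
    rw [smul_sub, sub_sub_cancel, smul_comm, ← Pi.single_smul' j (X ^ s : 𝔽[X]), smul_eq_mul,
      ← pow_add, add_comm s]
  exact (W.smul_mem_iff (hlm j).1).1 (hsplit ▸ W.sub_mem hb htail)

theorem codisjoint_footprint
    (hcompat : ∀ (k k' : ℕ) (j j' : Fin r), le (k, j) (k', j') → le (k + 1, j) (k' + 1, j'))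
    (hwf : WellFounded fun a b => le a b ∧ a ≠ b) (hbS : ∀ j, b j ∈ S)
    (hlm : ∀ j, IsLM le (b j) (d j, j)) :
    Codisjoint (S.restrictScalars 𝔽) (footprint 𝔽 d) :=
  codisjoint_iff.2 <| eq_top_iff.2 fun _ _ => mem_of_forall_msupp_single_mem _ fun m _ =>
    single_X_pow_mem_sup_footprint hcompat hwf hbS hlm m

end GroebnerBasis

theorem groebner_footprint_dimension_general
    {𝔽 : Type*} [Field 𝔽] {r : ℕ}
    (le : ℕ × Fin r → ℕ × Fin r → Prop)
    (htot : ∀ m m', le m m' ∨ le m' m)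
    (htrans : ∀ a b c, le a b → le b c → le a c)
    (hcompat : ∀ (k k' : ℕ) (j j' : Fin r), le (k, j) (k', j') → le (k + 1, j) (k' + 1, j'))
    (hwf : WellFounded (fun a b => le a b ∧ a ≠ b))
    (S : Submodule (Polynomial 𝔽) (Fin r → Polynomial 𝔽))
    (b : Fin r → (Fin r → Polynomial 𝔽)) (d : Fin r → ℕ)
    (hbS : ∀ j, b j ∈ S)
    (hlm : ∀ j, IsLM le (b j) (d j, j))
    (hGB : ∀ f ∈ S, f ≠ 0 → ∀ m, IsLM le f m → ∃ j, m.2 = j ∧ d j ≤ m.1) :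
    Module.finrank 𝔽 ((Fin r → Polynomial 𝔽) ⧸ S.restrictScalars 𝔽) = ∑ j, d j := by
  have hcompl : IsCompl (S.restrictScalars 𝔽) (footprint 𝔽 d) :=
    ⟨disjoint_footprint htot htrans hGB, codisjoint_footprint hcompat hwf hbS hlm⟩
  rw [(Submodule.quotientEquivOfIsCompl _ _ hcompl).finrank_eq, finrank_footprint]

/-- if `B = {b_0, …, b_{r-1}}` is a Gröbner basis of a submodule `S` of the
free `𝔽[x]`-module of rank `r` with `LM(b_j) = x^{d_j} e_j`, then
`dim_𝔽 (M/S) = d_0 + ⋯ + d_{r-1}` (the footprint/staircase count). -/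
theorem groebner_footprint_dimension
    {𝔽 : Type*} [Field 𝔽] {r : ℕ}
    (le : ℕ × Fin r → ℕ × Fin r → Prop)
    (hrefl : ∀ m, le m m)
    (htot : ∀ m m', le m m' ∨ le m' m)
    (htrans : ∀ a b c, le a b → le b c → le a c)
    (hanti : ∀ a b, le a b → le b a → a = b)
    (hcompat : ∀ (k k' : ℕ) (j j' : Fin r), le (k, j) (k', j') → le (k + 1, j) (k' + 1, j'))
    (hxgt : ∀ (k : ℕ) (j : Fin r), le (k, j) (k + 1, j))
    (hwf : WellFounded (fun a b => le a b ∧ a ≠ b))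
    (S : Submodule (Polynomial 𝔽) (Fin r → Polynomial 𝔽))
    (b : Fin r → (Fin r → Polynomial 𝔽)) (d : Fin r → ℕ)
    (hbS : ∀ j, b j ∈ S)
    (hlm : ∀ j, IsLM le (b j) (d j, j))
    (hGB : ∀ f ∈ S, f ≠ 0 → ∀ m, IsLM le f m → ∃ j, m.2 = j ∧ d j ≤ m.1) :
    Module.finrank 𝔽 ((Fin r → Polynomial 𝔽) ⧸ S.restrictScalars 𝔽) = ∑ j, d j :=
  groebner_footprint_dimension_general le htot htrans hcompat hwf S b d hbS hlm hGB
end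

section
/- For any nonzero f ∈ R̄, the quotient R̄/(R·f) is finite-dimensional over 𝔽 with dim_𝔽 R̄/(R·f) = deg(G) + δ(f). -/
/-- for nonzero `f ∈ R̄`, `dim_𝔽 (R̄/(R·f)) = deg G + δ(f)` where
`δ(f) = -v_Q(f) - v_Q(G)`.  Here `LQ s` encodes `L(sQ)` (so `R = ∪_{s≥0} L(sQ)`),
`L s` encodes `L(sQ+G)` (so `R̄ = ∪_s L(sQ+G)`), and Riemann–Roch is encoded by
the dimension hypotheses. -/
theorem dim_Rbar_mod_Rf
    {𝔽 F : Type*} [Field 𝔽] [Field F] [Algebra 𝔽 F]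
    (v : F → ℤ) (g : ℕ) (vQG degG : ℤ)
    (L LQ : ℤ → Submodule 𝔽 F)
    (hv : ∀ f h : F, f ≠ 0 → h ≠ 0 → v (f * h) = v f + v h)
    (hval : ∀ (s : ℤ) (f : F), f ∈ L s → f ≠ 0 → -v f - vQG ≤ s)
    (hshift : ∀ (s t : ℤ) (f : F), f ∈ L s → f ≠ 0 → -v f - vQG ≤ t → f ∈ L t)
    (hbot : ∀ s : ℤ, s + degG < 0 → L s = ⊥)
    (hvalQ : ∀ (s : ℤ) (f : F), f ∈ LQ s → f ≠ 0 → -v f ≤ s)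
    (hshiftQ : ∀ (s t : ℤ) (f : F), f ∈ LQ s → f ≠ 0 → -v f ≤ t → f ∈ LQ t)
    (hbotQ : ∀ s : ℤ, s < 0 → LQ s = ⊥)
    (hprod : ∀ (s t : ℤ) (f h : F), f ∈ LQ s → h ∈ L t → f * h ∈ L (s + t))
    (hfd : ∀ s : ℤ, FiniteDimensional 𝔽 (L s))
    (hfdQ : ∀ s : ℤ, FiniteDimensional 𝔽 (LQ s))
    (hRR : ∀ s : ℤ, 2 * (g : ℤ) - 1 ≤ s + degG →
      (Module.finrank 𝔽 (L s) : ℤ) = s + degG + 1 - g)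
    (hRRQ : ∀ s : ℤ, 2 * (g : ℤ) - 1 ≤ s →
      (Module.finrank 𝔽 (LQ s) : ℤ) = s + 1 - g)
    (f : F) (hf0 : f ≠ 0) (hfRbar : ∃ t : ℤ, f ∈ L t) :
    (Module.finrank 𝔽
      ((⨆ s : ℤ, L s : Submodule 𝔽 F) ⧸
        Submodule.comap (⨆ s : ℤ, L s : Submodule 𝔽 F).subtype
          (Submodule.map (LinearMap.mulRight 𝔽 f) (⨆ s : ℕ, LQ (s : ℤ)))) : ℤ)
      = degG + (-v f - vQG) := by
  classical
  set δ : ℤ := -v f - vQG with hδ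
  -- f ∈ L δ
  have hfδ : f ∈ L δ := by
    obtain ⟨t, ht⟩ := hfRbar
    exact hshift t δ f ht hf0 le_rfl
  -- monotonicity
  have hmono : ∀ s t : ℤ, s ≤ t → L s ≤ L t := by
    intro s t hst x hx
    by_cases hx0 : x = 0
    · simpa [hx0] using (L t).zero_mem
    · exact hshift s t x hx hx0 ((hval s x hx hx0).trans hst)
  have hmonoQ : ∀ s t : ℤ, s ≤ t → LQ s ≤ LQ t := by
    intro s t hst x hx
    by_cases hx0 : x = 0
    · simpa [hx0] using (LQ t).zero_mem
    · exact hshiftQ s t x hx hx0 ((hvalQ s x hx hx0).trans hst)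
  have hmulinj : Function.Injective (LinearMap.mulRight 𝔽 f) := by
    intro a b h
    simp only [LinearMap.mulRight_apply] at h
    exact mul_right_cancel₀ hf0 h
  set Rbar : Submodule 𝔽 F := ⨆ s : ℤ, L s with hRbar
  set RQ : Submodule 𝔽 F := ⨆ s : ℕ, LQ (s : ℤ) with hRQ
  set W : Submodule 𝔽 F := Submodule.map (LinearMap.mulRight 𝔽 f) RQ with hW
  -- membership in the unions
  have hRbarMem : ∀ x : F, x ∈ Rbar ↔ ∃ t : ℤ, x ∈ L t := by
    intro x
    rw [hRbar, Submodule.mem_iSup_of_directed]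
    intro i j
    exact ⟨max i j, hmono _ _ (le_max_left _ _), hmono _ _ (le_max_right _ _)⟩
  have hRQMem : ∀ x : F, x ∈ RQ ↔ ∃ n : ℕ, x ∈ LQ (n : ℤ) := by
    intro x
    rw [hRQ, Submodule.mem_iSup_of_directed]
    intro i j
    exact ⟨max i j, hmonoQ _ _ (by exact_mod_cast le_max_left i j),
      hmonoQ _ _ (by exact_mod_cast le_max_right i j)⟩
  have hLQle : ∀ s : ℤ, 0 ≤ s → LQ s ≤ RQ := by
    intro s hs x hx
    rw [hRQMem]
    exact ⟨s.toNat, by rwa [Int.toNat_of_nonneg hs]⟩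
  -- choose s₀
  set s₀ : ℤ := max (2 * (g : ℤ)) (2 * (g : ℤ) - δ - degG) with hs₀def
  have hs₀1 : 2 * (g : ℤ) ≤ s₀ := le_max_left _ _
  have hs₀2 : 2 * (g : ℤ) ≤ s₀ + δ + degG := by
    have := le_max_right (2 * (g : ℤ)) (2 * (g : ℤ) - δ - degG)
    omega
  have hg0 : (0 : ℤ) ≤ g := Int.natCast_nonneg g
  -- key: the sup decomposition
  have hsup : ∀ t : ℤ, 2 * (g : ℤ) ≤ t - 1 + degG → 2 * (g : ℤ) ≤ t - δ - 1 →
      L t ≤ L (t - 1) ⊔ Submodule.map (LinearMap.mulRight 𝔽 f) (LQ (t - δ)) := by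
    intro t h1 h2
    set A : Submodule 𝔽 F := L (t - 1)
    set B : Submodule 𝔽 F := Submodule.map (LinearMap.mulRight 𝔽 f) (LQ (t - δ)) with hB
    have hAle : A ≤ L t := hmono _ _ (by omega)
    have hBle : B ≤ L t := by
      rintro _ ⟨x, hx, rfl⟩
      have h := hprod (t - δ) δ x f hx hfδ
      rw [sub_add_cancel] at h
      simpa using h
    have hinf : A ⊓ B = Submodule.map (LinearMap.mulRight 𝔽 f) (LQ (t - δ - 1)) := by
      apply le_antisymm
      · rintro y ⟨hyA, x, hx, rfl⟩
        by_cases hx0 : x = 0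
        · exact ⟨0, (LQ _).zero_mem, by simp [hx0]⟩
        · refine ⟨x, ?_, rfl⟩
          have hxf : x * f ≠ 0 := mul_ne_zero hx0 hf0
          have h1' : -v (x * f) - vQG ≤ t - 1 := by
            simpa using hval (t - 1) (x * f) hyA hxf
          have h2' : v (x * f) = v x + v f := hv x f hx0 hf0
          exact hshiftQ (t - δ) (t - δ - 1) x hx hx0 (by omega)
      · rintro _ ⟨x, hx, rfl⟩
        refine ⟨?_, ⟨x, hmonoQ _ _ (by omega) hx, rfl⟩⟩
        have h := hprod (t - δ - 1) δ x f hx hfδ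
        have : t - δ - 1 + δ = t - 1 := by ring
        rw [this] at h
        simpa using h
    haveI := hfd (t - 1)
    haveI := hfd t
    haveI := hfdQ (t - δ)
    haveI := hfdQ (t - δ - 1)
    haveI : FiniteDimensional 𝔽 B :=
      Module.Finite.map (LQ (t - δ)) (LinearMap.mulRight 𝔽 f)
    have hA : (Module.finrank 𝔽 A : ℤ) = t - 1 + degG + 1 - g := hRR (t - 1) (by omega)
    have hBrank : (Module.finrank 𝔽 B : ℤ) = t - δ + 1 - g := by
      have e := (Submodule.equivMapOfInjective (LinearMap.mulRight 𝔽 f) hmulinj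
        (LQ (t - δ))).symm.finrank_eq
      rw [hB, e]
      exact hRRQ (t - δ) (by omega)
    have hIrank : (Module.finrank 𝔽 (A ⊓ B : Submodule 𝔽 F) : ℤ) = t - δ - 1 + 1 - g := by
      rw [hinf]
      have e := (Submodule.equivMapOfInjective (LinearMap.mulRight 𝔽 f) hmulinj
        (LQ (t - δ - 1))).symm.finrank_eq
      rw [e]
      exact hRRQ (t - δ - 1) (by omega)
    have hsum := Submodule.finrank_sup_add_finrank_inf_eq A B
    have hT : (Module.finrank 𝔽 (L t) : ℤ) = t + degG + 1 - g := hRR t (by omega)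
    have hle' : A ⊔ B ≤ L t := sup_le hAle hBle
    have hranks : Module.finrank 𝔽 (L t) ≤ Module.finrank 𝔽 (A ⊔ B : Submodule 𝔽 F) := by
      have hsum' : (Module.finrank 𝔽 (A ⊔ B : Submodule 𝔽 F) : ℤ)
          + (Module.finrank 𝔽 (A ⊓ B : Submodule 𝔽 F) : ℤ)
          = (Module.finrank 𝔽 A : ℤ) + (Module.finrank 𝔽 B : ℤ) := by
        exact_mod_cast congrArg (fun n : ℕ => (n : ℤ)) hsum
      omega
    exact le_of_eq (Submodule.eq_of_le_of_finrank_le hle' hranks).symm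
  -- surjectivity statement
  have hsur : ∀ (t : ℤ) (x : F), x ∈ L t → ∃ y ∈ L (s₀ + δ), x - y ∈ W := by
    have key : ∀ n : ℕ, ∀ x ∈ L (s₀ + δ + n), ∃ y ∈ L (s₀ + δ), x - y ∈ W := by
      intro n
      induction n with
      | zero =>
        intro x hx
        exact ⟨x, by simpa using hx, by simpa using W.zero_mem⟩
      | succ n ih =>
        intro x hx
        set t : ℤ := s₀ + δ + (n + 1 : ℕ) with htdef
        have ht : t = s₀ + δ + (n : ℤ) + 1 := by push_cast [htdef]; ring
        have hmem : x ∈ L (t - 1) ⊔ Submodule.map (LinearMap.mulRight 𝔽 f) (LQ (t - δ)) :=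
          hsup t (by omega) (by omega) hx
        rw [Submodule.mem_sup] at hmem
        obtain ⟨a, ha, b, hb, rfl⟩ := hmem
        have ha' : a ∈ L (s₀ + δ + (n : ℕ)) := by
          have : t - 1 = s₀ + δ + (n : ℕ) := by push_cast; omega
          rwa [this] at ha
        obtain ⟨y, hy, hay⟩ := ih a ha'
        refine ⟨y, hy, ?_⟩
        have hbW : b ∈ W := Submodule.map_mono (hLQle (t - δ) (by omega)) hb
        have : a + b - y = (a - y) + b := by ring
        rw [this]
        exact W.add_mem hay hbW
    intro t x hx
    rcases le_or_gt t (s₀ + δ) with h | h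
    · exact ⟨x, hmono t _ h hx, by simpa using W.zero_mem⟩
    · have hn : ((t - (s₀ + δ)).toNat : ℤ) = t - (s₀ + δ) := Int.toNat_of_nonneg (by omega)
      have : x ∈ L (s₀ + δ + ((t - (s₀ + δ)).toNat : ℤ)) := by rw [hn]; simpa using hx
      exact key _ x this
  -- set up the linear maps
  set N : Submodule 𝔽 Rbar := Submodule.comap Rbar.subtype W with hN
  have hle : L (s₀ + δ) ≤ Rbar := le_iSup L (s₀ + δ)
  set φ : L (s₀ + δ) →ₗ[𝔽] Rbar ⧸ N := N.mkQ.comp (Submodule.inclusion hle) with hφ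
  have hφ_surj : Function.Surjective φ := by
    intro z
    obtain ⟨w, rfl⟩ := N.mkQ_surjective z
    obtain ⟨t, hwt⟩ := (hRbarMem (w : F)).mp w.2
    obtain ⟨y, hy, hwy⟩ := hsur t (w : F) hwt
    refine ⟨⟨y, hy⟩, ?_⟩
    rw [hφ]
    simp only [LinearMap.comp_apply, Submodule.mkQ_apply]
    rw [Submodule.Quotient.eq]
    show (Submodule.inclusion hle ⟨y, hy⟩ : Rbar) - w ∈ N
    have : ((Submodule.inclusion hle ⟨y, hy⟩ : Rbar) - w : Rbar) ∈ N ↔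
        (y - (w : F)) ∈ W := by
      rw [hN, Submodule.mem_comap]
      simp [Submodule.inclusion]
    rw [this]
    have := W.neg_mem hwy
    simpa using this
  -- the kernel
  set ψ : LQ s₀ →ₗ[𝔽] L (s₀ + δ) :=
    LinearMap.codRestrict (L (s₀ + δ)) ((LinearMap.mulRight 𝔽 f).comp (LQ s₀).subtype)
      (by
        rintro ⟨x, hx⟩
        simpa using hprod s₀ δ x f hx hfδ) with hψ
  have hψinj : Function.Injective ψ := by
    intro a b h
    have h' : (a : F) * f = (b : F) * f := by
      have := congrArg (fun z : L (s₀ + δ) => (z : F)) h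
      simpa [hψ] using this
    exact Subtype.ext (mul_right_cancel₀ hf0 h')
  have hker : LinearMap.ker φ = LinearMap.range ψ := by
    ext x
    constructor
    · intro hx
      have hxW : (x : F) ∈ W := by
        rw [LinearMap.mem_ker, hφ] at hx
        simp only [LinearMap.comp_apply, Submodule.mkQ_apply,
          Submodule.Quotient.mk_eq_zero] at hx
        rw [hN, Submodule.mem_comap] at hx
        simpa [Submodule.inclusion] using hx
      obtain ⟨h, hh, hhx⟩ := hxW
      simp only [LinearMap.mulRight_apply] at hhx
      by_cases hh0 : h = 0
      · have hx0 : (x : F) = 0 := by rw [← hhx, hh0, zero_mul]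
        refine ⟨0, ?_⟩
        apply Subtype.ext
        simp [hψ, hx0]
      · obtain ⟨n, hn⟩ := (hRQMem h).mp hh
        have hx0 : (x : F) ≠ 0 := by
          rw [← hhx]; exact mul_ne_zero hh0 hf0
        have h1 : -v (x : F) - vQG ≤ s₀ + δ := hval _ _ x.2 hx0
        have h2 : v (x : F) = v h + v f := by rw [← hhx]; exact hv h f hh0 hf0
        have hhs : h ∈ LQ s₀ := hshiftQ n s₀ h hn hh0 (by omega)
        refine ⟨⟨h, hhs⟩, ?_⟩
        apply Subtype.ext
        simpa [hψ] using hhx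
    · rintro ⟨a, rfl⟩
      rw [LinearMap.mem_ker, hφ]
      simp only [LinearMap.comp_apply, Submodule.mkQ_apply, Submodule.Quotient.mk_eq_zero]
      rw [hN, Submodule.mem_comap]
      have : ((ψ a : F)) ∈ W := by
        refine ⟨(a : F), hLQle s₀ (by omega) a.2, ?_⟩
        simp [hψ]
      simpa [Submodule.inclusion] using this
  -- finish by rank counting
  haveI := hfd (s₀ + δ)
  haveI := hfdQ s₀
  have e1 := (LinearMap.quotKerEquivOfSurjective φ hφ_surj).finrank_eq
  have e2 := Submodule.finrank_quotient_add_finrank (LinearMap.ker φ)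
  have e3 : Module.finrank 𝔽 (LinearMap.ker φ) = Module.finrank 𝔽 (LQ s₀) := by
    rw [hker]
    exact (LinearEquiv.ofInjective ψ hψinj).symm.finrank_eq
  have hRRv : (Module.finrank 𝔽 (L (s₀ + δ)) : ℤ) = s₀ + δ + degG + 1 - g :=
    hRR (s₀ + δ) (by omega)
  have hRRQv : (Module.finrank 𝔽 (LQ s₀) : ℤ) = s₀ + 1 - g := hRRQ s₀ (by omega)
  have efinal : (Module.finrank 𝔽 (Rbar ⧸ N) : ℤ) = degG + δ := by
    have : (Module.finrank 𝔽 ((L (s₀ + δ)) ⧸ LinearMap.ker φ) : ℤ)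
        + (Module.finrank 𝔽 (LinearMap.ker φ) : ℤ)
        = (Module.finrank 𝔽 (L (s₀ + δ)) : ℤ) := by exact_mod_cast e2
    rw [← e1]
    omega
  exact efinal
end

section
/- In the decoding algorithm setting, each Lagrange interpolation element h_i ∈ R̄ with ev(h_i) equal to the i-th standard basis vector of 𝔽^n can be chosen with δ(h_i) ≤ n − deg(G) + 2g − 1; consequently, writing h_i = Σ_j h_{ij} ȳ_j over 𝔽[x], every coefficient polynomial satisfies deg(h_{ij}) ≤ (n + 2g − 1)/γ. -/
section Helpers

variable {𝔽 F : Type*} [Field 𝔽] [Field F] [Algebra 𝔽 F] (v : F → ℤ)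

lemma aux_val_neg
    (hv : ∀ f h : F, f ≠ 0 → h ≠ 0 → v (f * h) = v f + v h)
    (hvconst : ∀ c : 𝔽, c ≠ 0 → v (algebraMap 𝔽 F c) = 0)
    (f : F) (hf : f ≠ 0) : v (-f) = v f := by
  have h1 : ((-1 : F)) = algebraMap 𝔽 F (-1) := by simp
  have h2 : v ((-1 : F)) = 0 := by rw [h1]; exact hvconst (-1) (by norm_num)
  have h3 := hv (-1) f (by norm_num) hf
  rw [neg_one_mul] at h3
  rw [h3, h2, zero_add]

lemma aux_val_min
    (hv : ∀ f h : F, f ≠ 0 → h ≠ 0 → v (f * h) = v f + v h)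
    (hvadd : ∀ f h : F, f ≠ 0 → h ≠ 0 → f + h ≠ 0 → min (v f) (v h) ≤ v (f + h))
    (hvconst : ∀ c : 𝔽, c ≠ 0 → v (algebraMap 𝔽 F c) = 0)
    (f h : F) (hf : f ≠ 0) (hh : h ≠ 0) (hlt : v f < v h) :
    f + h ≠ 0 ∧ v (f + h) = v f := by
  have hne : f + h ≠ 0 := by
    intro heq
    have hfh : f = -h := eq_neg_of_add_eq_zero_left heq
    rw [hfh, aux_val_neg v hv hvconst h hh] at hlt
    exact lt_irrefl _ hlt
  refine ⟨hne, le_antisymm ?_ ?_⟩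
  · by_contra hgt
    push_neg at hgt
    have h1 : f = (f + h) + (-h) := by ring
    have h2 := hvadd (f + h) (-h) hne (neg_ne_zero.mpr hh) (by rw [← h1]; exact hf)
    rw [← h1, aux_val_neg v hv hvconst h hh] at h2
    have := min_le_iff.mp h2
    omega
  · have h2 := hvadd f h hf hh hne
    omega

lemma aux_val_sum {ι : Type*} [DecidableEq ι]
    (hmin : ∀ f h : F, f ≠ 0 → h ≠ 0 → v f < v h → f + h ≠ 0 ∧ v (f + h) = v f)
    (S : Finset ι) (t : ι → F) (w : ι → ℤ)
    (ht : ∀ i ∈ S, t i ≠ 0 ∧ v (t i) = w i)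
    (hinj : ∀ i ∈ S, ∀ j ∈ S, w i = w j → i = j)
    (hS : S.Nonempty) :
    (∑ i ∈ S, t i) ≠ 0 ∧ ∃ i ∈ S, v (∑ i ∈ S, t i) = w i ∧ ∀ k ∈ S, w i ≤ w k := by
  induction S using Finset.cons_induction with
  | empty => exact absurd hS (by simp)
  | cons a S ha IH =>
    rw [Finset.sum_cons]
    have hta := ht a (Finset.mem_cons_self a S)
    rcases S.eq_empty_or_nonempty with rfl | hSne
    · simp only [Finset.sum_empty, add_zero]
      exact ⟨hta.1, a, Finset.mem_cons_self a _, hta.2, fun k hk => by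
        rcases Finset.mem_cons.mp hk with rfl | hk
        · exact le_refl _
        · exact absurd hk (by simp)⟩
    · obtain ⟨hsum, i, hiS, hvi, hmini⟩ := IH
        (fun i hi => ht i (Finset.mem_cons_of_mem hi))
        (fun i hi j hj => hinj i (Finset.mem_cons_of_mem hi) j (Finset.mem_cons_of_mem hj))
        hSne
      have hai : a ≠ i := fun h => ha (h ▸ hiS)
      have hwai : w a ≠ w i := fun h =>
        hai (hinj a (Finset.mem_cons_self a S) i (Finset.mem_cons_of_mem hiS) h)
      rcases lt_or_gt_of_ne hwai with hlt | hgt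
      · have hres := hmin (t a) (∑ i ∈ S, t i) hta.1 hsum (by rw [hta.2, hvi]; exact hlt)
        refine ⟨hres.1, a, Finset.mem_cons_self a S, by rw [hres.2, hta.2], ?_⟩
        intro k hk
        rcases Finset.mem_cons.mp hk with rfl | hk
        · exact le_refl _
        · exact le_of_lt (lt_of_lt_of_le hlt (hmini k hk))
      · have hres := hmin (∑ i ∈ S, t i) (t a) hsum hta.1 (by rw [hta.2, hvi]; exact hgt)
        rw [add_comm] at hres
        refine ⟨hres.1, i, Finset.mem_cons_of_mem hiS, by rw [hres.2, hvi], ?_⟩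
        intro k hk
        rcases Finset.mem_cons.mp hk with rfl | hk
        · exact le_of_lt hgt
        · exact hmini k hk

lemma aux_val_pow
    (hv : ∀ f h : F, f ≠ 0 → h ≠ 0 → v (f * h) = v f + v h)
    (hvconst : ∀ c : 𝔽, c ≠ 0 → v (algebraMap 𝔽 F c) = 0)
    (γ : ℕ) (x : F) (hx : x ≠ 0) (hvx : v x = -(γ : ℤ)) :
    ∀ k : ℕ, x ^ k ≠ 0 ∧ v (x ^ k) = -((k : ℤ) * γ) := by
  intro k
  induction k with
  | zero =>
    refine ⟨by simp, ?_⟩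
    have h1 : (1 : F) = algebraMap 𝔽 F 1 := by simp
    rw [pow_zero, h1, hvconst 1 one_ne_zero]
    simp
  | succ k IH =>
    refine ⟨pow_ne_zero _ hx, ?_⟩
    rw [pow_succ, hv _ _ IH.1 hx, IH.2, hvx]
    push_cast
    ring

lemma aux_val_aeval
    (hv : ∀ f h : F, f ≠ 0 → h ≠ 0 → v (f * h) = v f + v h)
    (hvadd : ∀ f h : F, f ≠ 0 → h ≠ 0 → f + h ≠ 0 → min (v f) (v h) ≤ v (f + h))
    (hvconst : ∀ c : 𝔽, c ≠ 0 → v (algebraMap 𝔽 F c) = 0)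
    (γ : ℕ) (hγ : 0 < γ) (x : F) (hx : x ≠ 0) (hvx : v x = -(γ : ℤ))
    (p : Polynomial 𝔽) (hp : p ≠ 0) :
    Polynomial.aeval x p ≠ 0 ∧
      v (Polynomial.aeval x p) = -((p.natDegree : ℤ) * γ) := by
  have hrep : Polynomial.aeval x p
      = ∑ k ∈ p.support, algebraMap 𝔽 F (p.coeff k) * x ^ k := by
    rw [Polynomial.aeval_def, Polynomial.eval₂_eq_sum, Polynomial.sum_def]
  have ht : ∀ k ∈ p.support,
      (algebraMap 𝔽 F (p.coeff k) * x ^ k ≠ 0) ∧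
      v (algebraMap 𝔽 F (p.coeff k) * x ^ k) = -((k : ℤ) * γ) := by
    intro k hk
    have hc : p.coeff k ≠ 0 := Polynomial.mem_support_iff.mp hk
    have hc' : algebraMap 𝔽 F (p.coeff k) ≠ 0 := by
      simpa using (algebraMap 𝔽 F).injective.ne hc
    have hpow := aux_val_pow v hv hvconst γ x hx hvx k
    refine ⟨mul_ne_zero hc' hpow.1, ?_⟩
    rw [hv _ _ hc' hpow.1, hvconst _ hc, hpow.2, zero_add]
  have hinj : ∀ i ∈ p.support, ∀ j ∈ p.support,
      -((i : ℤ) * γ) = -((j : ℤ) * γ) → i = j := by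
    intro i _ j _ hij
    have hγ' : (γ : ℤ) ≠ 0 := by exact_mod_cast hγ.ne'
    have : (i : ℤ) = j := mul_right_cancel₀ hγ' (by omega)
    exact_mod_cast this
  obtain ⟨hsum, i, hiS, hvi, hmini⟩ := aux_val_sum v
    (aux_val_min v hv hvadd hvconst) p.support _ (fun k => -((k : ℤ) * γ))
    ht hinj (Polynomial.nonempty_support_iff.mpr hp)
  have hdmem : p.natDegree ∈ p.support := Polynomial.natDegree_mem_support_of_nonzero hp
  have h1 : (p.natDegree : ℤ) ≤ i := by
    have := hmini p.natDegree hdmem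
    have hγ' : (0 : ℤ) < γ := by exact_mod_cast hγ
    nlinarith
  have h2 : i ≤ p.natDegree := Polynomial.le_natDegree_of_mem_supp i hiS
  have hieq : i = p.natDegree := by omega
  rw [← hrep] at hsum hvi
  exact ⟨hsum, by rw [hvi, hieq]⟩

end Helpers

/-- the Lagrange interpolation functions `h_i ∈ R̄` with
`ev(h_i) = e_i` (the `i`-th standard basis vector of `𝔽^n`) can be chosen with
`δ(h_i) ≤ n - deg G + 2g - 1` (i.e. `h_i ∈ L((n - deg G + 2g - 1)Q + G)`), and
consequently, writing `h_i = Σ_j h_{ij}(x) ȳ_j` over `𝔽[x]`, every coefficient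
polynomial satisfies `γ · deg(h_{ij}) ≤ n + 2g - 1`.
Here `L s` encodes `L(sQ+G)`, `LD s` encodes `L(sQ+G-D)`, `v` is the valuation
at `Q`, `x` has pole order `γ` at `Q`, and `ȳ_j` is the `𝔽[x]`-basis of `R̄` with
`δ(ȳ_j) = b̄_j ≥ -deg G` pairwise distinct mod `γ`. -/
theorem lagrange_basis_delta_and_degree_bounds
    {𝔽 F : Type*} [Field 𝔽] [Field F] [Algebra 𝔽 F]
    (v : F → ℤ) (g γ n : ℕ) (hγ : 0 < γ) (vQG degG : ℤ)
    (L LD : ℤ → Submodule 𝔽 F)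
    (ev : F →ₗ[𝔽] (Fin n → 𝔽))
    (hv : ∀ f h : F, f ≠ 0 → h ≠ 0 → v (f * h) = v f + v h)
    (hvadd : ∀ f h : F, f ≠ 0 → h ≠ 0 → f + h ≠ 0 → min (v f) (v h) ≤ v (f + h))
    (hvconst : ∀ c : 𝔽, c ≠ 0 → v (algebraMap 𝔽 F c) = 0)
    (hval : ∀ (s : ℤ) (f : F), f ∈ L s → f ≠ 0 → -v f - vQG ≤ s)
    (hshift : ∀ (s t : ℤ) (f : F), f ∈ L s → f ≠ 0 → -v f - vQG ≤ t → f ∈ L t)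
    (hLD : ∀ s : ℤ, LD s ≤ L s)
    (hker : ∀ (s : ℤ) (f : F), f ∈ L s → (ev f = 0 ↔ f ∈ LD s))
    (hfd : ∀ s : ℤ, FiniteDimensional 𝔽 (L s))
    (hRR : ∀ s : ℤ, 2 * (g : ℤ) - 1 ≤ s + degG →
      (Module.finrank 𝔽 (L s) : ℤ) = s + degG + 1 - g)
    (hRRD : ∀ s : ℤ, 2 * (g : ℤ) - 1 ≤ s + degG - n →
      (Module.finrank 𝔽 (LD s) : ℤ) = s + degG - n + 1 - g)
    (x : F) (hx : x ≠ 0) (hvx : v x = -(γ : ℤ))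
    (hxL : ∀ (t : ℤ) (f : F), f ∈ L t → x * f ∈ L (t + γ))
    (ybar : Fin γ → F) (bbar : Fin γ → ℤ)
    (hybar : ∀ j, ybar j ≠ 0 ∧ ybar j ∈ L (bbar j) ∧ -v (ybar j) - vQG = bbar j)
    (hbbarG : ∀ j, -degG ≤ bbar j)
    (hres : ∀ j j' : Fin γ, bbar j % γ = bbar j' % γ → j = j') :
    ∃ h : Fin n → F, ∀ i : Fin n,
      h i ∈ L ((n : ℤ) - degG + 2 * g - 1) ∧
      ev (h i) = Pi.single i 1 ∧
      ∀ p : Fin γ → Polynomial 𝔽,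
        h i = ∑ j : Fin γ, Polynomial.aeval x (p j) * ybar j →
        ∀ j, p j ≠ 0 → (γ : ℤ) * (p j).natDegree ≤ (n : ℤ) + 2 * g - 1 := by
  classical
  set s : ℤ := (n : ℤ) - degG + 2 * g - 1 with hs
  haveI := hfd s
  -- surjectivity of ev restricted to L s
  let T : L s →ₗ[𝔽] (Fin n → 𝔽) := ev ∘ₗ (L s).subtype
  have hkerT : LinearMap.ker T = Submodule.comap (L s).subtype (LD s) := by
    ext f
    simp only [LinearMap.mem_ker, Submodule.mem_comap, LinearMap.coe_comp,
      Function.comp_apply, Submodule.coe_subtype, T]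
    exact hker s f f.2
  have hrkL : Module.finrank 𝔽 (L s) = n + g := by
    have h1 := hRR s (by omega)
    have h2 : s + degG + 1 - (g : ℤ) = ((n + g : ℕ) : ℤ) := by push_cast; omega
    rw [h2] at h1
    exact_mod_cast h1
  have hrkLD : Module.finrank 𝔽 (LD s) = g := by
    have h1 := hRRD s (by omega)
    have h2 : s + degG - (n : ℤ) + 1 - g = ((g : ℕ) : ℤ) := by push_cast; omega
    rw [h2] at h1
    exact_mod_cast h1
  have hrkker : Module.finrank 𝔽 (LinearMap.ker T) = g := by
    rw [hkerT, (Submodule.comapSubtypeEquivOfLe (hLD s)).finrank_eq]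
    exact hrkLD
  have hrn := LinearMap.finrank_range_add_finrank_ker T
  have hrange : Module.finrank 𝔽 (LinearMap.range T) = n := by omega
  have hT : LinearMap.range T = ⊤ := by
    apply Submodule.eq_top_of_finrank_eq
    rw [hrange]
    simp [Module.finrank_pi]
  have hsurj : Function.Surjective T := LinearMap.range_eq_top.mp hT
  refine ⟨fun i => ((hsurj (Pi.single i 1)).choose : F), fun i => ?_⟩
  obtain ⟨a, ha⟩ : ∃ a : L s, T a = Pi.single i 1 :=
    ⟨(hsurj (Pi.single i 1)).choose, (hsurj (Pi.single i 1)).choose_spec⟩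
  set hi : F := ((hsurj (Pi.single i 1)).choose : F) with hhi
  have hmem : hi ∈ L s := ((hsurj (Pi.single i 1)).choose).2
  have hev : ev hi = Pi.single i 1 := (hsurj (Pi.single i 1)).choose_spec
  refine ⟨hmem, hev, ?_⟩
  intro p hrep0 j hpj
  have hrep : hi = ∑ j : Fin γ, Polynomial.aeval x (p j) * ybar j := hrep0
  -- set up the sum over nonzero coefficient polynomials
  set S : Finset (Fin γ) := Finset.univ.filter (fun j => p j ≠ 0) with hS
  have hjS : j ∈ S := by simp [hS, hpj]
  have hsum : hi = ∑ j ∈ S, Polynomial.aeval x (p j) * ybar j := by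
    rw [hrep]
    refine (Finset.sum_subset (Finset.filter_subset _ _) ?_).symm
    intro k _ hk
    have hk0 : p k = 0 := by simpa [hS] using hk
    rw [hk0]
    simp
  have hvybar : ∀ j, v (ybar j) = -bbar j - vQG := by
    intro j'
    have := (hybar j').2.2
    omega
  have ht : ∀ k ∈ S,
      (Polynomial.aeval x (p k) * ybar k ≠ 0) ∧
      v (Polynomial.aeval x (p k) * ybar k)
        = -(((p k).natDegree : ℤ) * γ) + (-bbar k - vQG) := by
    intro k hk
    have hpk : p k ≠ 0 := by simpa [hS] using hk
    have haev := aux_val_aeval v hv hvadd hvconst γ hγ x hx hvx (p k) hpk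
    refine ⟨mul_ne_zero haev.1 (hybar k).1, ?_⟩
    rw [hv _ _ haev.1 (hybar k).1, haev.2, hvybar k]
  have hinj : ∀ k ∈ S, ∀ k' ∈ S,
      -(((p k).natDegree : ℤ) * γ) + (-bbar k - vQG)
        = -(((p k').natDegree : ℤ) * γ) + (-bbar k' - vQG) → k = k' := by
    intro k _ k' _ heq
    apply hres
    have hdvd : (γ : ℤ) ∣ bbar k' - bbar k :=
      ⟨((p k) : Polynomial 𝔽).natDegree - ((p k') : Polynomial 𝔽).natDegree, by linarith⟩
    have : bbar k ≡ bbar k' [ZMOD (γ : ℤ)] := Int.modEq_iff_dvd.mpr hdvd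
    exact this
  obtain ⟨hsum0, i0, hi0S, hvi0, hmini0⟩ := aux_val_sum v
    (aux_val_min v hv hvadd hvconst) S _
    (fun k => -(((p k).natDegree : ℤ) * γ) + (-bbar k - vQG))
    ht hinj ⟨j, hjS⟩
  rw [← hsum] at hsum0 hvi0
  have hvalhi := hval s hi hmem hsum0
  have hle := hmini0 j hjS
  rw [← hvi0] at hle
  have hbj := hbbarG j
  have hcomm : (γ : ℤ) * ((p j).natDegree : ℤ) = ((p j).natDegree : ℤ) * γ := mul_comm _ _
  rw [hcomm]
  omega
end
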